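/- arXiv:1810.09307 — 2 statements merged into one kernel-verified Lean document; each statement's English description precedes it below -/
import Mathlib

section
/- For every n ≥ 1 with n ≠ 3, the monoid swEnd P_n of strong weak endomorphisms of the path P_n consists exactly of the identity map of {1,…,n}, the reversal map τ defined by xτ = n − x + 1, and the n constant maps of {1,…,n}. -/
/-- `{u,v}` is an edge of the path `P_n` (vertices `0,…,n-1` standing for `1,…,n`). -/
def pathAdj {n : ℕ} (u v : Fin n) : Prop := |((u : ℕ) : ℤ) - ((v : ℕ) : ℤ)| = 1

/-- The reversal map `τ` of `{1,…,n}`, `xτ = n - x + 1` (in `0`-indexed form: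
`x ↦ n - 1 - x`). -/
def pathTau (n : ℕ) : Function.End (Fin n) :=
  fun x => ⟨(n - 1 - (x : ℕ)) % n, Nat.mod_lt _ x.pos⟩

/-- `α` is a strong weak endomorphism of the path `P_n`. -/
def IsSWEndo {n : ℕ} (f : Function.End (Fin n)) : Prop :=
  ∀ u v : Fin n, (pathAdj u v ∧ f u ≠ f v) ↔ pathAdj (f u) (f v)

lemma pathAdj_iff {n : ℕ} (u v : Fin n) :
    pathAdj u v ↔ ((u : ℕ) + 1 = (v : ℕ) ∨ (v : ℕ) + 1 = (u : ℕ)) := by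
  rw [pathAdj, abs_eq (by norm_num : (0:ℤ) ≤ 1)]
  omega

lemma pathTau_val {n : ℕ} (x : Fin n) : ((pathTau n x : Fin n) : ℕ) = n - 1 - (x : ℕ) := by
  have hx := x.isLt
  simp only [pathTau]
  exact Nat.mod_eq_of_lt (by omega)

/-- For `n ≠ 3`, `swEnd P_n` consists exactly of the identity, the reversal `τ`, and the
`n` constant maps. -/
theorem swEnd_path_eq (n : ℕ) (hn : 1 ≤ n) (hn3 : n ≠ 3) :
    {f : Function.End (Fin n) | IsSWEndo f}
      = ({1, pathTau n} : Set (Function.End (Fin n)))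
        ∪ {f : Function.End (Fin n) | ∃ c : Fin n, f = Function.const (Fin n) c} := by
  ext f
  simp only [Set.mem_setOf_eq, Set.mem_union, Set.mem_insert_iff, Set.mem_singleton_iff]
  constructor
  · -- hard direction
    intro hf
    have hrefl : ∀ u v : Fin n, pathAdj (f u) (f v) → pathAdj u v :=
      fun u v h => ((hf u v).2 h).1
    have hstep : ∀ u v : Fin n, pathAdj u v → f u = f v ∨ pathAdj (f u) (f v) := by
      intro u v h
      by_cases he : f u = f v
      · exact Or.inl he
      · exact Or.inr ((hf u v).1 ⟨h, he⟩)
    by_cases hn1 : n = 1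
    · subst hn1
      right
      refine ⟨f ⟨0, by omega⟩, funext fun w => ?_⟩
      have hw : w = ⟨0, by omega⟩ := Fin.ext (by have := w.isLt; omega)
      rw [hw]
      rfl
    by_cases hcon : ∃ i, ∃ hi : i + 1 < n, f ⟨i, by omega⟩ = f ⟨i + 1, hi⟩
    · -- f is constant
      right
      obtain ⟨i, hi, heq⟩ := hcon
      set c := f ⟨i, by omega⟩ with hc
      -- a vertex whose image is adjacent to c gives a contradiction
      have hkey : ∀ w : Fin n, pathAdj (f w) c → False := by
        intro w hw
        have h1 : pathAdj w ⟨i, by omega⟩ := hrefl _ _ hw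
        have h2 : pathAdj w ⟨i + 1, hi⟩ := hrefl _ _ (by rw [← heq]; exact hw)
        rw [pathAdj_iff] at h1 h2
        simp only [Fin.val_mk] at h1 h2
        omega
      have up : ∀ k, ∀ hk : i + k < n, f ⟨i + k, hk⟩ = c := by
        intro k
        induction k with
        | zero => intro hk; rfl
        | succ k ih =>
          intro hk
          have hk' : i + k < n := by omega
          have hprev := ih hk'
          rcases hstep ⟨i + k, hk'⟩ ⟨i + (k + 1), hk⟩
              (by rw [pathAdj_iff]; refine Or.inl ?_; simp only [Fin.val_mk]; omega) with h | h
          · rw [← h]; exact hprev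
          · refine (hkey ⟨i + (k + 1), hk⟩ ?_).elim
            rw [← hprev]
            rw [pathAdj_iff] at h ⊢
            tauto
      have down : ∀ k, ∀ hk : k ≤ i, f ⟨i - k, by omega⟩ = c := by
        intro k
        induction k with
        | zero => intro hk; rfl
        | succ k ih =>
          intro hk
          have hk' : k ≤ i := by omega
          have hprev := ih hk'
          rcases hstep ⟨i - (k + 1), by omega⟩ ⟨i - k, by omega⟩
              (by rw [pathAdj_iff]; refine Or.inl ?_; simp only [Fin.val_mk]; omega) with h | h
          · rw [h]; exact hprev
          · refine (hkey ⟨i - (k + 1), by omega⟩ ?_).elim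
            rw [← hprev]
            exact h
      refine ⟨c, funext fun w => ?_⟩
      show f w = c
      rcases le_or_gt i w.val with h | h
      · have := up (w.val - i) (by omega)
        have hw : (⟨i + (w.val - i), by omega⟩ : Fin n) = w := Fin.ext (by simp; omega)
        rwa [hw] at this
      · have := down (i - w.val) (by omega)
        have hw : (⟨i - (i - w.val), by omega⟩ : Fin n) = w := Fin.ext (by simp; omega)
        rwa [hw] at this
    · -- every step is ±1
      left
      push_neg at hcon
      have hA : ∀ i, ∀ hi : i + 1 < n, pathAdj (f ⟨i, by omega⟩) (f ⟨i + 1, hi⟩) := by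
        intro i hi
        rcases hstep ⟨i, by omega⟩ ⟨i + 1, hi⟩
            (by rw [pathAdj_iff]; exact Or.inl rfl) with h | h
        · exact absurd h (hcon i hi)
        · exact h
      have hA' : ∀ u v : Fin n, (u : ℕ) + 1 = (v : ℕ) → pathAdj (f u) (f v) := by
        intro u v huv
        have hlt : (u : ℕ) + 1 < n := by have := v.isLt; omega
        have h' := hA (u : ℕ) hlt
        have e1 : (⟨(u : ℕ), by omega⟩ : Fin n) = u := rfl
        have e2 : (⟨(u : ℕ) + 1, hlt⟩ : Fin n) = v := Fin.ext huv
        rwa [e1, e2] at h' 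
      -- no turns
      have noturn : ∀ i, ∀ h2 : i + 2 < n, f ⟨i, by omega⟩ ≠ f ⟨i + 2, h2⟩ := by
        intro i h2 heq
        by_cases h3 : i + 3 < n
        · have ha : pathAdj (f ⟨i + 2, h2⟩) (f ⟨i + 3, h3⟩) := by
            have := hA (i + 2) h3
            convert this using 3 <;> omega
          rw [← heq] at ha
          have := hrefl _ _ ha
          rw [pathAdj_iff] at this
          simp only [Fin.val_mk] at this
          omega
        · by_cases h0 : 1 ≤ i
          · have ha : pathAdj (f ⟨i - 1, by omega⟩) (f ⟨i, by omega⟩) :=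
              hA' ⟨i - 1, by omega⟩ ⟨i, by omega⟩ (by simp only [Fin.val_mk]; omega)
            rw [heq] at ha
            have := hrefl _ _ ha
            rw [pathAdj_iff] at this
            simp only [Fin.val_mk] at this
            omega
          · omega
      have h1n : 1 < n := by omega
      -- directions
      rcases (pathAdj_iff _ _).1 (hA 0 h1n) with hdir | hdir
      · -- increasing
        have mono : ∀ i, ∀ hi : i + 1 < n,
            ((f ⟨i, by omega⟩ : Fin n) : ℕ) + 1 = ((f ⟨i + 1, hi⟩ : Fin n) : ℕ) := by
          intro i
          induction i with
          | zero => intro hi; exact hdir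
          | succ k ih =>
            intro hi
            have hk : k + 1 < n := by omega
            have hprev := ih hk
            have hnorm : ((f ⟨k + 1 + 1, hi⟩ : Fin n) : ℕ) = ((f ⟨k + 2, hi⟩ : Fin n) : ℕ) :=
              rfl
            rcases (pathAdj_iff _ _).1 (hA (k + 1) hi) with h | h
            · omega
            · exfalso
              apply noturn k hi
              apply Fin.ext
              omega
        have vals : ∀ i, ∀ hi : i < n,
            ((f ⟨i, hi⟩ : Fin n) : ℕ) = ((f ⟨0, by omega⟩ : Fin n) : ℕ) + i := by
          intro i
          induction i with
          | zero => intro hi; rfl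
          | succ k ih =>
            intro hi
            have := mono k hi
            have := ih (by omega)
            omega
        have hlast := vals (n - 1) (by omega)
        have hltlast := (f ⟨n - 1, by omega⟩).isLt
        have h0 : ((f ⟨0, by omega⟩ : Fin n) : ℕ) = 0 := by omega
        left
        funext w
        show f w = w
        apply Fin.ext
        have := vals w.val w.isLt
        have hw : (⟨w.val, w.isLt⟩ : Fin n) = w := Fin.ext rfl
        rw [hw] at this
        omega
      · -- decreasing
        have mono : ∀ i, ∀ hi : i + 1 < n,
            ((f ⟨i + 1, hi⟩ : Fin n) : ℕ) + 1 = ((f ⟨i, by omega⟩ : Fin n) : ℕ) := by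
          intro i
          induction i with
          | zero => intro hi; exact hdir
          | succ k ih =>
            intro hi
            have hk : k + 1 < n := by omega
            have hprev := ih hk
            have hnorm : ((f ⟨k + 1 + 1, hi⟩ : Fin n) : ℕ) = ((f ⟨k + 2, hi⟩ : Fin n) : ℕ) :=
              rfl
            rcases (pathAdj_iff _ _).1 (hA (k + 1) hi) with h | h
            · exfalso
              apply noturn k hi
              apply Fin.ext
              omega
            · omega
        have vals : ∀ i, ∀ hi : i < n,
            ((f ⟨i, hi⟩ : Fin n) : ℕ) + i = ((f ⟨0, by omega⟩ : Fin n) : ℕ) := by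
          intro i
          induction i with
          | zero => intro hi; rfl
          | succ k ih =>
            intro hi
            have := mono k hi
            have := ih (by omega)
            omega
        have hlast := vals (n - 1) (by omega)
        have hlt0 := (f ⟨0, by omega⟩).isLt
        right
        funext w
        show f w = pathTau n w
        apply Fin.ext
        rw [pathTau_val]
        have := vals w.val w.isLt
        have hw : (⟨w.val, w.isLt⟩ : Fin n) = w := Fin.ext rfl
        rw [hw] at this
        omega
  · -- easy direction
    rintro ((rfl | rfl) | ⟨c, rfl⟩)
    · intro u v
      show (pathAdj u v ∧ u ≠ v) ↔ pathAdj u v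
      constructor
      · exact fun h => h.1
      · intro h
        refine ⟨h, ?_⟩
        rintro rfl
        rw [pathAdj_iff] at h
        omega
    · intro u v
      have hu := u.isLt
      have hv := v.isLt
      constructor
      · rintro ⟨h, -⟩
        rw [pathAdj_iff] at h ⊢
        rw [pathTau_val, pathTau_val]
        omega
      · intro h
        rw [pathAdj_iff, pathTau_val, pathTau_val] at h
        constructor
        · rw [pathAdj_iff]; omega
        · intro he
          have : ((pathTau n u : Fin n) : ℕ) = ((pathTau n v : Fin n) : ℕ) := by
            show ((pathTau n u : Fin n) : ℕ) = _
            exact congrArg Fin.val he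
          rw [pathTau_val, pathTau_val] at this
          omega
    · intro u v
      simp only [Function.const_apply, ne_eq, not_true_eq_false, and_false,
        false_iff]
      intro h
      rw [pathAdj_iff] at h
      omega
end

section
/- Let α ∈ End P_n and let A'' = {τ} ∪ {α_i : i = 1,…,n−2}. Then every α' ∈ End P_n with ker(α') = ker(α) belongs to the submonoid of End P_n generated by A'' ∪ {α}. -/
/-- `α` is a weak endomorphism of the path `P_n` (with vertices `0,…,n-1` standing for
`1,…,n`): `|iα - (i+1)α| ≤ 1` for all consecutive pairs of vertices. -/
def IsWEndo {n : ℕ} (f : Function.End (Fin n)) : Prop :=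
  ∀ i : ℕ, ∀ h : i + 1 < n,
    |(((f ⟨i, by omega⟩ : Fin n) : ℕ) : ℤ) - (((f ⟨i + 1, h⟩ : Fin n) : ℕ) : ℤ)| ≤ 1

/-- `α` is an endomorphism of the path `P_n`: `|iα - (i+1)α| = 1` for all consecutive
pairs of vertices. -/
def IsEndo {n : ℕ} (f : Function.End (Fin n)) : Prop :=
  ∀ i : ℕ, ∀ h : i + 1 < n,
    |(((f ⟨i, by omega⟩ : Fin n) : ℕ) : ℤ) - (((f ⟨i + 1, h⟩ : Fin n) : ℕ) : ℤ)| = 1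

/-- The transformation `α_i` of `{1,…,n}`: `xα_i = i + 2 - x` for `1 ≤ x ≤ i+1` and
`xα_i = x - i` for `i+1 ≤ x ≤ n`.  In `0`-indexed form this is `x ↦ |x - i|`
(the `% n` is the identity in the considered range `1 ≤ i ≤ n-2`). -/
def pathAlpha (n i : ℕ) : Function.End (Fin n) :=
  fun x => ⟨(if (x : ℕ) ≤ i then i - (x : ℕ) else (x : ℕ) - i) % n, Nat.mod_lt _ x.pos⟩

private def FV {n : ℕ} (f : Function.End (Fin n)) (i : ℕ) (h : i < n) : ℤ :=
  ((f ⟨i, h⟩ : Fin n) : ℕ)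

private lemma FV_bounds {n : ℕ} (f : Function.End (Fin n)) (i : ℕ) (h : i < n) :
    0 ≤ FV f i h ∧ FV f i h ≤ (n : ℤ) - 1 := by
  unfold FV
  have := (f ⟨i, h⟩).isLt
  omega

private lemma endo_step {n : ℕ} {f : Function.End (Fin n)} (hf : IsEndo f) (i : ℕ)
    (h : i + 1 < n) :
    FV f (i+1) h = FV f i (by omega) + 1 ∨ FV f (i+1) h = FV f i (by omega) - 1 := by
  have h2 : |FV f i (by omega) - FV f (i+1) h| = 1 := hf i h
  rcases (abs_eq (by norm_num : (0:ℤ) ≤ 1)).1 h2 with h3 | h3 <;> omega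

private lemma sign_step (a0 a1 a2 b0 b1 b2 ε : ℤ)
    (e2 : a2 = a1 + 1 ∨ a2 = a1 - 1)
    (e2' : b2 = b1 + 1 ∨ b2 = b1 - 1)
    (hiff : b2 = b0 ↔ a2 = a0)
    (IH : (b1 - b0) * (a1 - a0) = ε)
    (e1 : a1 = a0 + 1 ∨ a1 = a0 - 1)
    (e1' : b1 = b0 + 1 ∨ b1 = b0 - 1) :
    (b2 - b1) * (a2 - a1) = ε := by
  rcases e1 with rfl | rfl <;> rcases e2 with rfl | rfl <;> rcases e1' with rfl | rfl <;>
    rcases e2' with rfl | rfl <;> ring_nf <;> ring_nf at IH <;> omega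

private lemma eps_pm (a0 a1 b0 b1 : ℤ)
    (e : a1 = a0 + 1 ∨ a1 = a0 - 1) (e' : b1 = b0 + 1 ∨ b1 = b0 - 1) :
    (b1 - b0) * (a1 - a0) = 1 ∨ (b1 - b0) * (a1 - a0) = -1 := by
  rcases e with rfl | rfl <;> rcases e' with rfl | rfl <;> norm_num

private lemma key_step (a1 a2 b1 b2 ε C : ℤ)
    (e2 : a2 = a1 + 1 ∨ a2 = a1 - 1) (e2' : b2 = b1 + 1 ∨ b2 = b1 - 1)
    (hs : (b2 - b1) * (a2 - a1) = ε)
    (IH : b1 = ε * a1 + C) : b2 = ε * a2 + C := by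
  obtain rfl := hs.symm
  rcases e2 with rfl | rfl <;> rcases e2' with rfl | rfl <;>
    ring_nf at IH ⊢ <;> omega

private lemma tau_coe {n : ℕ} (x : Fin n) : ((pathTau n x : Fin n) : ℕ) = n - 1 - x := by
  have hx := x.isLt
  have h : n - 1 - (x : ℕ) < n := by omega
  simp [pathTau, Nat.mod_eq_of_lt h]

private lemma alpha_coe {n i : ℕ} (hi : i < n) (x : Fin n) :
    ((pathAlpha n i x : Fin n) : ℕ) = if (x : ℕ) ≤ i then i - (x : ℕ) else (x : ℕ) - i := by
  have hx := x.isLt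
  by_cases h : (x : ℕ) ≤ i
  · simp [pathAlpha, h, Nat.mod_eq_of_lt (by omega : i - (x:ℕ) < n)]
  · simp [pathAlpha, h, Nat.mod_eq_of_lt (by omega : (x:ℕ) - i < n)]


/-- Every `α' ∈ End P_n` with `ker α' = ker α` lies in the submonoid generated by
`A'' ∪ {α}`, where `A'' = {τ} ∪ {α_i : 1 ≤ i ≤ n-2}`. -/
theorem End_path_same_ker_mem_closure (n : ℕ) (f f' : Function.End (Fin n))
    (hf : IsEndo f) (hf' : IsEndo f')
    (hker : ∀ x y : Fin n, f' x = f' y ↔ f x = f y) :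
    f' ∈ Submonoid.closure
      ({pathTau n} ∪ {g | ∃ i, 1 ≤ i ∧ i ≤ n - 2 ∧ g = pathAlpha n i} ∪ {f}) := by
  set S : Set (Function.End (Fin n)) :=
    {pathTau n} ∪ {g | ∃ i, 1 ≤ i ∧ i ≤ n - 2 ∧ g = pathAlpha n i} ∪ {f} with hS
  have hmemτ : pathTau n ∈ S := Or.inl (Or.inl rfl)
  have hmemf : f ∈ S := Or.inr rfl
  have hmemα : ∀ c : ℕ, 1 ≤ c → c ≤ n - 2 → pathAlpha n c ∈ S :=
    fun c h1 h2 => Or.inl (Or.inr ⟨c, h1, h2, rfl⟩)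
  rcases Nat.lt_or_ge n 2 with hn | hn
  · -- trivial cases n = 0, 1
    have : f' = 1 := by
      funext x
      interval_cases n
      · exact x.elim0
      · exact Subsingleton.elim _ _
    rw [this]
    exact Submonoid.one_mem _
  -- main case, n ≥ 2
  have h0 : 0 < n := by omega
  have h1 : 1 < n := by omega
  -- the kernel condition at the level of FV
  have hkerFV : ∀ i j (hi : i < n) (hj : j < n),
      (FV f' i hi = FV f' j hj) ↔ (FV f i hi = FV f j hj) := by
    intro i j hi hj
    unfold FV
    rw [Nat.cast_inj, Nat.cast_inj, Fin.val_inj, Fin.val_inj]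
    exact hker _ _
  -- the invariant: product of consecutive signs is constant
  obtain ⟨ε, hε, key⟩ : ∃ ε : ℤ, (ε = 1 ∨ ε = -1) ∧ ∀ i (h : i < n),
      FV f' i h = ε * FV f i h + (FV f' 0 h0 - ε * FV f 0 h0) := by
    refine ⟨(FV f' 1 h1 - FV f' 0 h0) * (FV f 1 h1 - FV f 0 h0), ?_, ?_⟩
    · exact eps_pm (FV f 0 h0) (FV f 1 h1) (FV f' 0 h0) (FV f' 1 h1)
        (endo_step hf 0 h1) (endo_step hf' 0 h1)
    · have inv : ∀ i (h : i + 1 < n),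
          (FV f' (i+1) h - FV f' i (by omega)) * (FV f (i+1) h - FV f i (by omega)) =
            (FV f' 1 h1 - FV f' 0 h0) * (FV f 1 h1 - FV f 0 h0) := by
        intro i
        induction i with
        | zero => intro h; rfl
        | succ i ih =>
          intro h
          have hi1 : i + 1 < n := by omega
          exact sign_step (FV f i (by omega)) (FV f (i+1) hi1) (FV f (i+2) h)
            (FV f' i (by omega)) (FV f' (i+1) hi1) (FV f' (i+2) h) _
            (endo_step hf (i+1) h) (endo_step hf' (i+1) h)
            (hkerFV (i+2) i h (by omega)) (ih hi1)
            (endo_step hf i hi1) (endo_step hf' i hi1)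
      intro i
      induction i with
      | zero =>
        intro h
        have e1 : FV f' 0 h = FV f' 0 h0 := rfl
        have e2 : FV f 0 h = FV f 0 h0 := rfl
        rw [e1, e2]; ring
      | succ i ih =>
        intro h
        exact key_step (FV f i (by omega)) (FV f (i+1) h) (FV f' i (by omega))
          (FV f' (i+1) h) _ _ (endo_step hf i h) (endo_step hf' i h) (inv i h)
          (ih (by omega))
  -- extremal points
  have hexf : ∃ u, ∃ hu : u < n, ∃ v, ∃ hv : v < n,
      1 ≤ FV f u hu ∧ FV f v hv ≤ (n:ℤ) - 2 := by
    have b0 := FV_bounds f 0 h0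
    have b1 := FV_bounds f 1 h1
    have hst : FV f 1 h1 = FV f 0 h0 + 1 ∨ FV f 1 h1 = FV f 0 h0 - 1 :=
      endo_step hf 0 h1
    rcases hst with h2 | h2
    · exact ⟨1, h1, 0, h0, by omega, by omega⟩
    · exact ⟨0, h0, 1, h1, by omega, by omega⟩
  have hexf' : ∃ u, ∃ hu : u < n, ∃ v, ∃ hv : v < n,
      1 ≤ FV f' u hu ∧ FV f' v hv ≤ (n:ℤ) - 2 := by
    have b0 := FV_bounds f' 0 h0
    have b1 := FV_bounds f' 1 h1
    have hst : FV f' 1 h1 = FV f' 0 h0 + 1 ∨ FV f' 1 h1 = FV f' 0 h0 - 1 :=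
      endo_step hf' 0 h1
    rcases hst with h2 | h2
    · exact ⟨1, h1, 0, h0, by omega, by omega⟩
    · exact ⟨0, h0, 1, h1, by omega, by omega⟩
  obtain ⟨u, hu, v, hv, hu1, hv1⟩ := hexf
  obtain ⟨u', hu', v', hv', hu1', hv1'⟩ := hexf'
  rcases hε with rfl | rfl
  · -- ε = 1 : f' is a shift of f
    set D : ℤ := FV f' 0 h0 - 1 * FV f 0 h0 with hD
    rcases lt_trichotomy D 0 with hd | hd | hd
    · -- shift down: f' = α_c ∘ f with c = -D
      set c : ℕ := (-D).toNat with hc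
      have hcD : (c : ℤ) = -D := Int.toNat_of_nonneg (by omega)
      have hc1 : 1 ≤ c := by omega
      have hc2 : c ≤ n - 2 := by
        have := key u' hu'
        have := FV_bounds f u' hu'
        omega
      have heq : f' = pathAlpha n c * f := by
        funext x
        have hx := key x.1 x.2
        have hb := FV_bounds f' x.1 x.2
        apply Fin.ext
        show (f' x).val = (pathAlpha n c (f x)).val
        rw [alpha_coe (by omega : c < n) (f x)]
        simp only [FV, Fin.eta] at hx hb
        split <;> omega
      rw [heq]
      exact mul_mem (Submonoid.subset_closure (hmemα c hc1 hc2))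
        (Submonoid.subset_closure hmemf)
    · -- D = 0 : f' = f
      have heq : f' = f := by
        funext x
        have hx := key x.1 x.2
        apply Fin.ext
        simp only [FV, Fin.eta] at hx
        omega
      rw [heq]
      exact Submonoid.subset_closure hmemf
    · -- shift up: f' = τ ∘ α_c ∘ τ ∘ f with c = D
      set c : ℕ := D.toNat with hc
      have hcD : (c : ℤ) = D := Int.toNat_of_nonneg (by omega)
      have hc1 : 1 ≤ c := by omega
      have hc2 : c ≤ n - 2 := by
        have := key u hu
        have := FV_bounds f' u hu
        omega
      have heq : f' = pathTau n * (pathAlpha n c * (pathTau n * f)) := by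
        funext x
        have hx := key x.1 x.2
        have hb := FV_bounds f' x.1 x.2
        have hb2 := FV_bounds f x.1 x.2
        apply Fin.ext
        show (f' x).val = (pathTau n (pathAlpha n c (pathTau n (f x)))).val
        rw [tau_coe, alpha_coe (by omega : c < n), tau_coe]
        simp only [FV, Fin.eta] at hx hb hb2
        split <;> omega
      rw [heq]
      exact mul_mem (Submonoid.subset_closure hmemτ)
        (mul_mem (Submonoid.subset_closure (hmemα c hc1 hc2))
          (mul_mem (Submonoid.subset_closure hmemτ) (Submonoid.subset_closure hmemf)))
  · -- ε = -1 : f' is a reflection of f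
    set D : ℤ := FV f' 0 h0 - (-1) * FV f 0 h0 with hD
    rcases lt_trichotomy D ((n:ℤ) - 1) with hd | hd | hd
    · -- f' = α_c ∘ τ ∘ f with c = n - 1 - D
      set c : ℕ := ((n:ℤ) - 1 - D).toNat with hc
      have hcD : (c : ℤ) = (n:ℤ) - 1 - D := Int.toNat_of_nonneg (by omega)
      have hc1 : 1 ≤ c := by omega
      have hc2 : c ≤ n - 2 := by
        have := key u hu
        have := FV_bounds f' u hu
        omega
      have heq : f' = pathAlpha n c * (pathTau n * f) := by
        funext x
        have hx := key x.1 x.2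
        have hb := FV_bounds f' x.1 x.2
        have hb2 := FV_bounds f x.1 x.2
        apply Fin.ext
        show (f' x).val = (pathAlpha n c (pathTau n (f x))).val
        rw [alpha_coe (by omega : c < n), tau_coe]
        simp only [FV, Fin.eta] at hx hb hb2
        split <;> omega
      rw [heq]
      exact mul_mem (Submonoid.subset_closure (hmemα c hc1 hc2))
        (mul_mem (Submonoid.subset_closure hmemτ) (Submonoid.subset_closure hmemf))
    · -- f' = τ ∘ f
      have heq : f' = pathTau n * f := by
        funext x
        have hx := key x.1 x.2
        have hb := FV_bounds f' x.1 x.2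
        have hb2 := FV_bounds f x.1 x.2
        apply Fin.ext
        show (f' x).val = (pathTau n (f x)).val
        rw [tau_coe]
        simp only [FV, Fin.eta] at hx hb hb2
        omega
      rw [heq]
      exact mul_mem (Submonoid.subset_closure hmemτ) (Submonoid.subset_closure hmemf)
    · -- f' = τ ∘ α_c ∘ f with c = D - (n - 1)
      set c : ℕ := (D - ((n:ℤ) - 1)).toNat with hc
      have hcD : (c : ℤ) = D - ((n:ℤ) - 1) := Int.toNat_of_nonneg (by omega)
      have hc1 : 1 ≤ c := by omega
      have hc2 : c ≤ n - 2 := by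
        have := key v hv
        have := FV_bounds f' v hv
        omega
      have heq : f' = pathTau n * (pathAlpha n c * f) := by
        funext x
        have hx := key x.1 x.2
        have hb := FV_bounds f' x.1 x.2
        have hb2 := FV_bounds f x.1 x.2
        apply Fin.ext
        show (f' x).val = (pathTau n (pathAlpha n c (f x))).val
        rw [tau_coe, alpha_coe (by omega : c < n)]
        simp only [FV, Fin.eta] at hx hb hb2
        split <;> omega
      rw [heq]
      exact mul_mem (Submonoid.subset_closure hmemτ)
        (mul_mem (Submonoid.subset_closure (hmemα c hc1 hc2))
          (Submonoid.subset_closure hmemf))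
end
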